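/- arXiv:0911.2797 — 6 statements merged into one kernel-verified Lean document; each statement's English description precedes it below -/
import Mathlib

section
/- Let a,b,c,d,e,f,g,h,i,j,k,l,m,n,p,q,r,s be 18 complex numbers such that (fs−ip)·(gr−hq)·F(l,−c)·F(μ,−λ) ≠ 0. Then the linear span of {v₁, v₂, v₃, v₄} in ℂ³⊗ℂ³ contains no nonzero product vector: for all x, y ∈ ℂ³, if x⊗y lies in the span of {v₁, v₂, v₃, v₄}, then x⊗y = 0. -/
open Complex ComplexConjugate
open scoped ComplexOrder

noncomputable section

/-- The "odd" checkerboard vector with entries at positions (0,0),(2,0),(1,1),(0,2),(2,2). -/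
def oddVec (a b c d e : ℂ) : Fin 3 × Fin 3 → ℂ := fun u =>
  if u = (0, 0) then a else if u = (2, 0) then b else if u = (1, 1) then c
  else if u = (0, 2) then d else if u = (2, 2) then e else 0

/-- The "even" checkerboard vector with entries at positions (1,0),(0,1),(2,1),(1,2). -/
def evenVec (f g h i : ℂ) : Fin 3 × Fin 3 → ℂ := fun u =>
  if u = (1, 0) then f else if u = (0, 1) then g else if u = (2, 1) then h
  else if u = (1, 2) then i else 0

/-- Tensor product of two vectors of ℂ³, as a function on Fin 3 × Fin 3. -/
def tp (x y : Fin 3 → ℂ) : Fin 3 × Fin 3 → ℂ := fun u => x u.1 * y u.2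

/-- The binary quadratic form F(u,w) = (ae−bd)u² + (an+ej−bm−dk)uw + (jn−km)w². -/
def Fquad (a b d e j k m n : ℂ) (u w : ℂ) : ℂ :=
  (a * e - b * d) * u ^ 2 + (a * n + e * j - b * m - d * k) * u * w + (j * n - k * m) * w ^ 2

/-- λ = a(hs−ir)+b(iq−gs)+d(fr−hp)+e(gp−fq). -/
def lamP (a b d e f g h i p q r s : ℂ) : ℂ :=
  a * (h * s - i * r) + b * (i * q - g * s) + d * (f * r - h * p) + e * (g * p - f * q)

/-- μ = f(mr−nq)+g(np−ks)+h(js−mp)+i(kq−jr). -/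
def muP (f g h i j k m n p q r s : ℂ) : ℂ :=
  f * (m * r - n * q) + g * (n * p - k * s) + h * (j * s - m * p) + i * (k * q - j * r)

theorem stmt0 (a b c d e f g h i j k l m n p q r s : ℂ)
    (hcond : (f * s - i * p) * (g * r - h * q) * Fquad a b d e j k m n l (-c) *
      Fquad a b d e j k m n (muP f g h i j k m n p q r s)
        (-(lamP a b d e f g h i p q r s)) ≠ 0) :
    ∀ x y : Fin 3 → ℂ,
      tp x y ∈ Submodule.span ℂ
        ({oddVec a b c d e, evenVec f g h i, oddVec j k l m n, evenVec p q r s} :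
          Set (Fin 3 × Fin 3 → ℂ)) →
      tp x y = 0 := by
  simp only [mul_ne_zero_iff] at hcond
  obtain ⟨⟨⟨h1, h2⟩, h3⟩, h4⟩ := hcond
  simp only [Fquad, lamP, muP] at h3 h4
  intro x y hmem
  rw [Submodule.mem_span_insert] at hmem
  obtain ⟨al, w1, hw1, hxy⟩ := hmem
  rw [Submodule.mem_span_insert] at hw1
  obtain ⟨be, w2, hw2, hw1e⟩ := hw1
  rw [Submodule.mem_span_insert] at hw2
  obtain ⟨ga, w3, hw3, hw2e⟩ := hw2
  rw [Submodule.mem_span_singleton] at hw3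
  obtain ⟨de, hw3e⟩ := hw3
  subst hw3e; subst hw2e; subst hw1e
  have h00 := congrFun hxy ((0:Fin 3),(0:Fin 3))
  simp [tp, oddVec, evenVec, Prod.ext_iff] at h00
  have h10 := congrFun hxy ((1:Fin 3),(0:Fin 3))
  simp [tp, oddVec, evenVec, Prod.ext_iff] at h10
  have h20 := congrFun hxy ((2:Fin 3),(0:Fin 3))
  simp [tp, oddVec, evenVec, Prod.ext_iff] at h20
  have h01 := congrFun hxy ((0:Fin 3),(1:Fin 3))
  simp [tp, oddVec, evenVec, Prod.ext_iff] at h01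
  have h11 := congrFun hxy ((1:Fin 3),(1:Fin 3))
  simp [tp, oddVec, evenVec, Prod.ext_iff] at h11
  have h21 := congrFun hxy ((2:Fin 3),(1:Fin 3))
  simp [tp, oddVec, evenVec, Prod.ext_iff] at h21
  have h02 := congrFun hxy ((0:Fin 3),(2:Fin 3))
  simp [tp, oddVec, evenVec, Prod.ext_iff] at h02
  have h12 := congrFun hxy ((1:Fin 3),(2:Fin 3))
  simp [tp, oddVec, evenVec, Prod.ext_iff] at h12
  have h22 := congrFun hxy ((2:Fin 3),(2:Fin 3))
  simp [tp, oddVec, evenVec, Prod.ext_iff] at h22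
  by_cases hx1 : x 1 = 0
  · by_cases hy1 : y 1 = 0
    · -- x1 = 0, y1 = 0
      have hbe : be = 0 := by
        have hb0 : be * (f*s - i*p) = 0 := by
          linear_combination (-s)*h10 + p*h12 + (s*y 0 - p*y 2)*hx1
        exact (mul_eq_zero.mp hb0).resolve_right h1
      have hde : de = 0 := by
        have hd0 : de * (f*s - i*p) = 0 := by
          linear_combination (-f)*h12 + i*h10 + (f*y 2 - i*y 0)*hx1
        exact (mul_eq_zero.mp hd0).resolve_right h1
      have fq0 : ((a*e-b*d)*al^2 + (a*n+e*j-b*m-d*k)*al*ga + (j*n-k*m)*ga^2) = 0 := by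
        linear_combination (-(al*e+ga*n))*h00 - (x 0*y 0)*h22 + (al*d+ga*m)*h20 + (x 2*y 0)*h02
      have rel : al*c + ga*l = 0 := by
        linear_combination -h11 + (x 1)*hy1
      by_cases hal : al = 0
      · by_cases hga : ga = 0
        · rw [hxy, hal, hga, hbe, hde]; simp
        · exfalso; apply h3
          have key : ga^2 * ((a*e-b*d)*l^2 + (a*n+e*j-b*m-d*k)*l*(-c) + (j*n-k*m)*(-c)^2) = 0 := by
            linear_combination (c^2)*fq0 + ((a*e-b*d)*(l*ga - c*al) - (a*n+e*j-b*m-d*k)*c*ga)*rel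
          have := (mul_eq_zero.mp key).resolve_left (pow_ne_zero 2 hga)
          linear_combination this
      · exfalso; apply h3
        have key : al^2 * ((a*e-b*d)*l^2 + (a*n+e*j-b*m-d*k)*l*(-c) + (j*n-k*m)*(-c)^2) = 0 := by
          linear_combination (l^2)*fq0 + (-(a*n+e*j-b*m-d*k)*l*al + (j*n-k*m)*(c*al - l*ga))*rel
        have := (mul_eq_zero.mp key).resolve_left (pow_ne_zero 2 hal)
        linear_combination this
    · -- x1 = 0, y1 ≠ 0 : show x = 0
      have hbe : be = 0 := by
        have hb0 : be * (f*s - i*p) = 0 := by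
          linear_combination (-s)*h10 + p*h12 + (s*y 0 - p*y 2)*hx1
        exact (mul_eq_zero.mp hb0).resolve_right h1
      have hde : de = 0 := by
        have hd0 : de * (f*s - i*p) = 0 := by
          linear_combination (-f)*h12 + i*h10 + (f*y 2 - i*y 0)*hx1
        exact (mul_eq_zero.mp hd0).resolve_right h1
      have hx0 : x 0 = 0 := by
        have : x 0 * y 1 = 0 := by rw [h01, hbe, hde]; ring
        exact (mul_eq_zero.mp this).resolve_right hy1
      have hx2 : x 2 = 0 := by
        have : x 2 * y 1 = 0 := by rw [h21, hbe, hde]; ring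
        exact (mul_eq_zero.mp this).resolve_right hy1
      funext u
      have hxz : ∀ ii : Fin 3, x ii = 0 := by
        intro ii; fin_cases ii <;> assumption
      simp [tp, hxz]
  · by_cases hy1 : y 1 = 0
    · -- x1 ≠ 0, y1 = 0 : show y = 0
      have hbe : be = 0 := by
        have hb0 : be * (g*r - h*q) = 0 := by
          linear_combination (-r)*h01 + q*h21 + (r*x 0 - q*x 2)*hy1
        exact (mul_eq_zero.mp hb0).resolve_right h2
      have hde : de = 0 := by
        have hd0 : de * (g*r - h*q) = 0 := by
          linear_combination (-g)*h21 + h*h01 + (g*x 2 - h*x 0)*hy1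
        exact (mul_eq_zero.mp hd0).resolve_right h2
      have hy0 : y 0 = 0 := by
        have : x 1 * y 0 = 0 := by rw [h10, hbe, hde]; ring
        exact (mul_eq_zero.mp this).resolve_left hx1
      have hy2 : y 2 = 0 := by
        have : x 1 * y 2 = 0 := by rw [h12, hbe, hde]; ring
        exact (mul_eq_zero.mp this).resolve_left hx1
      funext u
      have hyz : ∀ jj : Fin 3, y jj = 0 := by
        intro jj; fin_cases jj <;> assumption
      simp [tp, hyz]
    · -- x1 ≠ 0, y1 ≠ 0 : contradiction
      exfalso
      have hC : x 1 * y 1 ≠ 0 := mul_ne_zero hx1 hy1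
      have e1 : x 1*y 1*(al*a+ga*j) = (be*f+de*p)*(be*g+de*q) := by
        linear_combination (-(x 1*y 1))*h00 + (x 0*y 1)*h10 + (be*f+de*p)*h01
      have e2 : x 1*y 1*(al*b+ga*k) = (be*f+de*p)*(be*h+de*r) := by
        linear_combination (-(x 1*y 1))*h20 + (x 2*y 1)*h10 + (be*f+de*p)*h21
      have e3 : x 1*y 1*(al*d+ga*m) = (be*g+de*q)*(be*i+de*s) := by
        linear_combination (-(x 1*y 1))*h02 + (x 1*y 2)*h01 + (be*g+de*q)*h12
      have e4 : x 1*y 1*(al*e+ga*n) = (be*h+de*r)*(be*i+de*s) := by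
        linear_combination (-(x 1*y 1))*h22 + (x 1*y 2)*h21 + (be*h+de*r)*h12
      have fA : (x 1*y 1)^2 * ((a*e-b*d)*al^2 + (a*n+e*j-b*m-d*k)*al*ga + (j*n-k*m)*ga^2) = 0 := by
        linear_combination (x 1*y 1*(al*e+ga*n))*e1 + ((be*f+de*p)*(be*g+de*q))*e4
          - (x 1*y 1*(al*d+ga*m))*e2 - ((be*f+de*p)*(be*h+de*r))*e3
      have fq0 : ((a*e-b*d)*al^2 + (a*n+e*j-b*m-d*k)*al*ga + (j*n-k*m)*ga^2) = 0 :=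
        (mul_eq_zero.mp fA).resolve_left (pow_ne_zero 2 hC)
      have fB : (x 1*y 1) * (al*(a*(h*s-i*r)+b*(i*q-g*s)+d*(f*r-h*p)+e*(g*p-f*q)) + ga*(f*(m*r-n*q)+g*(n*p-k*s)+h*(j*s-m*p)+i*(k*q-j*r))) = 0 := by
        linear_combination (h*s-i*r)*e1 - (g*s-i*q)*e2 + (f*r-h*p)*e3 - (f*q-g*p)*e4
      have rel0 : al*(a*(h*s-i*r)+b*(i*q-g*s)+d*(f*r-h*p)+e*(g*p-f*q)) + ga*(f*(m*r-n*q)+g*(n*p-k*s)+h*(j*s-m*p)+i*(k*q-j*r)) = 0 :=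
        (mul_eq_zero.mp fB).resolve_left hC
      apply h4
      by_cases hal : al = 0
      · have hga : ga ≠ 0 := by
          intro hg; exact hC (by rw [h11, hal, hg]; ring)
        have key : ga^2 * ((a*e-b*d)*(f*(m*r-n*q)+g*(n*p-k*s)+h*(j*s-m*p)+i*(k*q-j*r))^2 + (a*n+e*j-b*m-d*k)*(f*(m*r-n*q)+g*(n*p-k*s)+h*(j*s-m*p)+i*(k*q-j*r))*(-(a*(h*s-i*r)+b*(i*q-g*s)+d*(f*r-h*p)+e*(g*p-f*q))) + (j*n-k*m)*(-(a*(h*s-i*r)+b*(i*q-g*s)+d*(f*r-h*p)+e*(g*p-f*q)))^2) = 0 := by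
          linear_combination ((a*(h*s-i*r)+b*(i*q-g*s)+d*(f*r-h*p)+e*(g*p-f*q))^2)*fq0 + ((a*e-b*d)*(ga*(f*(m*r-n*q)+g*(n*p-k*s)+h*(j*s-m*p)+i*(k*q-j*r)) - (a*(h*s-i*r)+b*(i*q-g*s)+d*(f*r-h*p)+e*(g*p-f*q))*al) - (a*n+e*j-b*m-d*k)*(a*(h*s-i*r)+b*(i*q-g*s)+d*(f*r-h*p)+e*(g*p-f*q))*ga)*rel0
        have := (mul_eq_zero.mp key).resolve_left (pow_ne_zero 2 hga)
        linear_combination this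
      · have key : al^2 * ((a*e-b*d)*(f*(m*r-n*q)+g*(n*p-k*s)+h*(j*s-m*p)+i*(k*q-j*r))^2 + (a*n+e*j-b*m-d*k)*(f*(m*r-n*q)+g*(n*p-k*s)+h*(j*s-m*p)+i*(k*q-j*r))*(-(a*(h*s-i*r)+b*(i*q-g*s)+d*(f*r-h*p)+e*(g*p-f*q))) + (j*n-k*m)*(-(a*(h*s-i*r)+b*(i*q-g*s)+d*(f*r-h*p)+e*(g*p-f*q)))^2) = 0 := by
          linear_combination ((f*(m*r-n*q)+g*(n*p-k*s)+h*(j*s-m*p)+i*(k*q-j*r))^2)*fq0 + (-(a*n+e*j-b*m-d*k)*al*(f*(m*r-n*q)+g*(n*p-k*s)+h*(j*s-m*p)+i*(k*q-j*r)) + (j*n-k*m)*(al*(a*(h*s-i*r)+b*(i*q-g*s)+d*(f*r-h*p)+e*(g*p-f*q)) - ga*(f*(m*r-n*q)+g*(n*p-k*s)+h*(j*s-m*p)+i*(k*q-j*r))))*rel0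
        have := (mul_eq_zero.mp key).resolve_left (pow_ne_zero 2 hal)
        linear_combination this
end
end

section
/- Let a,b,c,d,e,f,g,h,i,j,k,l,m,n,p,q,r,s be 18 complex numbers such that (fs−ip)·(gr−hq)·F(l,−c)·F(μ,−λ) ≠ 0. Then the state ρ = (1/N) Σ_{t=1}^4 v_t v_t† is entangled, i.e., ρ is not separable. -/
open Complex ComplexConjugate
open scoped ComplexOrder

noncomputable section

/-- σ = Σ_{t=1}^4 v_t v_t†, a 9×9 complex matrix. -/
def sigmaM (a b c d e f g h i j k l m n p q r s : ℂ) :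
    Matrix (Fin 3 × Fin 3) (Fin 3 × Fin 3) ℂ :=
  Matrix.of fun u w =>
    oddVec a b c d e u * conj (oddVec a b c d e w)
      + evenVec f g h i u * conj (evenVec f g h i w)
      + oddVec j k l m n u * conj (oddVec j k l m n w)
      + evenVec p q r s u * conj (evenVec p q r s w)

/-- N = Σ_{t=1}^4 ‖v_t‖². -/
def Nval (a b c d e f g h i j k l m n p q r s : ℂ) : ℝ :=
  ∑ u : Fin 3 × Fin 3,
    (‖oddVec a b c d e u‖ ^ 2 + ‖evenVec f g h i u‖ ^ 2
      + ‖oddVec j k l m n u‖ ^ 2 + ‖evenVec p q r s u‖ ^ 2)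

/-- ρ = (1/N) Σ_{t=1}^4 v_t v_t†. -/
def rhoM (a b c d e f g h i j k l m n p q r s : ℂ) :
    Matrix (Fin 3 × Fin 3) (Fin 3 × Fin 3) ℂ :=
  ((Nval a b c d e f g h i j k l m n p q r s : ℂ))⁻¹
    • sigmaM a b c d e f g h i j k l m n p q r s

/-- A matrix on ℂ³⊗ℂ³ is separable if it is a finite sum of projections onto product vectors. -/
def SeparableMat (σ : Matrix (Fin 3 × Fin 3) (Fin 3 × Fin 3) ℂ) : Prop :=
  ∃ (n : ℕ) (x y : Fin n → Fin 3 → ℂ),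
    σ = ∑ t : Fin n, Matrix.of fun u w => tp (x t) (y t) u * conj (tp (x t) (y t) w)

lemma quad_eval {ι : Type*} [Fintype ι] (u v : ι → ℂ) :
    ∑ z, ∑ w, conj (u z) * (v z * conj (v w)) * u w
      = (∑ z, conj (u z) * v z) * conj (∑ z, conj (u z) * v z) := by
  rw [map_sum, Finset.sum_mul_sum]
  refine Finset.sum_congr rfl fun z _ => Finset.sum_congr rfl fun w _ => ?_
  rw [map_mul, Complex.conj_conj]
  ring

lemma core_alg (a b c d e f g h i j k l m n p q r s α β γ δ x0 x1 x2 y0 y1 y2 : ℂ)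
    (hD : f*s - i*p ≠ 0)
    (hG : g*r - h*q ≠ 0)
    (hF2 : (a*e - b*d) * (f*(m*r-n*q)+g*(n*p-k*s)+h*(j*s-m*p)+i*(k*q-j*r))^2
        + (a*n+e*j-b*m-d*k) * (f*(m*r-n*q)+g*(n*p-k*s)+h*(j*s-m*p)+i*(k*q-j*r))
            * (-(a*(h*s-i*r)+b*(i*q-g*s)+d*(f*r-h*p)+e*(g*p-f*q)))
        + (j*n-k*m) * (-(a*(h*s-i*r)+b*(i*q-g*s)+d*(f*r-h*p)+e*(g*p-f*q)))^2 ≠ 0)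
    (e00 : x0*y0 = α*a+γ*j) (e10 : x1*y0 = β*f+δ*p) (e20 : x2*y0 = α*b+γ*k)
    (e01 : x0*y1 = β*g+δ*q) (e11 : x1*y1 = α*c+γ*l) (e21 : x2*y1 = β*h+δ*r)
    (e02 : x0*y2 = α*d+γ*m) (e12 : x1*y2 = β*i+δ*s) (e22 : x2*y2 = α*e+γ*n) :
    x1*y0 = 0 ∧ x1*y2 = 0 := by
  by_cases hx1 : x1 = 0
  · constructor <;> rw [hx1, zero_mul]
  have hb : (f*s-i*p)*β = s*(x1*y0) - p*(x1*y2) := by linear_combination -s*e10 + p*e12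
  have hd : (f*s-i*p)*δ = f*(x1*y2) - i*(x1*y0) := by linear_combination i*e10 - f*e12
  have E1 : (f*s-i*p)*(x0*y1) = (g*s-q*i)*(x1*y0) + (q*f-g*p)*(x1*y2) := by
    linear_combination (f*s-i*p)*e01 + g*hb + q*hd
  have E2 : (f*s-i*p)*(x2*y1) = (h*s-r*i)*(x1*y0) + (r*f-h*p)*(x1*y2) := by
    linear_combination (f*s-i*p)*e21 + h*hb + r*hd
  by_cases hy1 : y1 = 0
  · subst hy1
    have hU : ((f*s-i*p)*(g*r-h*q)) * (x1*y0) = 0 := by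
      linear_combination (q*f-g*p)*E2 - (r*f-h*p)*E1
    have hV : ((f*s-i*p)*(g*r-h*q)) * (x1*y2) = 0 := by
      linear_combination (h*s-r*i)*E1 - (g*s-q*i)*E2
    have hDG : (f*s-i*p)*(g*r-h*q) ≠ 0 := mul_ne_zero hD hG
    exact ⟨(mul_eq_zero.mp hU).resolve_left hDG, (mul_eq_zero.mp hV).resolve_left hDG⟩
  exfalso
  have hT : x1*y1 ≠ 0 := mul_ne_zero hx1 hy1
  have I1 : (f*s-i*p)*(α*a+γ*j)*(x1*y1) = (g*s-q*i)*(x1*y0)^2 + (q*f-g*p)*(x1*y0)*(x1*y2) := by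
    linear_combination (x1*y0)*E1 - (f*s-i*p)*(x1*y1)*e00
  have I2 : (f*s-i*p)*(α*b+γ*k)*(x1*y1) = (h*s-r*i)*(x1*y0)^2 + (r*f-h*p)*(x1*y0)*(x1*y2) := by
    linear_combination (x1*y0)*E2 - (f*s-i*p)*(x1*y1)*e20
  have I3 : (f*s-i*p)*(α*d+γ*m)*(x1*y1) = (g*s-q*i)*(x1*y0)*(x1*y2) + (q*f-g*p)*(x1*y2)^2 := by
    linear_combination (x1*y2)*E1 - (f*s-i*p)*(x1*y1)*e02
  have I4 : (f*s-i*p)*(α*e+γ*n)*(x1*y1) = (h*s-r*i)*(x1*y0)*(x1*y2) + (r*f-h*p)*(x1*y2)^2 := by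
    linear_combination (x1*y2)*E2 - (f*s-i*p)*(x1*y1)*e22
  have hstar0 : ((f*s-i*p)*(x1*y1)) *
      ((a*(h*s-i*r)+b*(i*q-g*s)+d*(f*r-h*p)+e*(g*p-f*q))*α
        + (f*(m*r-n*q)+g*(n*p-k*s)+h*(j*s-m*p)+i*(k*q-j*r))*γ) = 0 := by
    linear_combination (h*s-r*i)*I1 - (g*s-q*i)*I2 + (r*f-h*p)*I3 - (q*f-g*p)*I4
  have hF00 : (((f*s-i*p)*(x1*y1))^2) *
      ((a*e-b*d)*α^2 + (a*n+e*j-b*m-d*k)*α*γ + (j*n-k*m)*γ^2) = 0 := by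
    linear_combination ((h*s-r*i)*((x1*y0)*(x1*y2)) + (r*f-h*p)*(x1*y2)^2)*I1
      + (f*s-i*p)*(α*a+γ*j)*(x1*y1)*I4
      - ((g*s-q*i)*((x1*y0)*(x1*y2)) + (q*f-g*p)*(x1*y2)^2)*I2
      - (f*s-i*p)*(α*b+γ*k)*(x1*y1)*I3
  have hDT : (f*s-i*p)*(x1*y1) ≠ 0 := mul_ne_zero hD hT
  have hstar : (a*(h*s-i*r)+b*(i*q-g*s)+d*(f*r-h*p)+e*(g*p-f*q))*α
        + (f*(m*r-n*q)+g*(n*p-k*s)+h*(j*s-m*p)+i*(k*q-j*r))*γ = 0 :=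
    (mul_eq_zero.mp hstar0).resolve_left hDT
  have hF0 : (a*e-b*d)*α^2 + (a*n+e*j-b*m-d*k)*α*γ + (j*n-k*m)*γ^2 = 0 :=
    (mul_eq_zero.mp hF00).resolve_left (pow_ne_zero 2 hDT)
  set L := a*(h*s-i*r)+b*(i*q-g*s)+d*(f*r-h*p)+e*(g*p-f*q) with hLdef
  set M := f*(m*r-n*q)+g*(n*p-k*s)+h*(j*s-m*p)+i*(k*q-j*r) with hMdef
  have hFq : (a*e-b*d)*M^2 + (a*n+e*j-b*m-d*k)*M*(-L) + (j*n-k*m)*(-L)^2 ≠ 0 := by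
    intro hz; apply hF2; linear_combination hz
  have hα2 : α^2 * ((a*e-b*d)*M^2 + (a*n+e*j-b*m-d*k)*M*(-L) + (j*n-k*m)*(-L)^2) = 0 := by
    linear_combination (-(a*n+e*j-b*m-d*k)*M*α + (j*n-k*m)*(L*α - M*γ)) * hstar + M^2 * hF0
  have hγ2 : γ^2 * ((a*e-b*d)*M^2 + (a*n+e*j-b*m-d*k)*M*(-L) + (j*n-k*m)*(-L)^2) = 0 := by
    linear_combination ((a*e-b*d)*(M*γ - L*α) - (a*n+e*j-b*m-d*k)*L*γ) * hstar + L^2 * hF0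
  have hα : α = 0 := by
    have := (mul_eq_zero.mp hα2).resolve_right hFq
    exact pow_eq_zero_iff (two_ne_zero) |>.mp this
  have hγ : γ = 0 := by
    have := (mul_eq_zero.mp hγ2).resolve_right hFq
    exact pow_eq_zero_iff (two_ne_zero) |>.mp this
  apply hT
  rw [e11, hα, hγ]; ring

theorem stmt1 (a b c d e f g h i j k l m n p q r s : ℂ)
    (hcond : (f * s - i * p) * (g * r - h * q) * Fquad a b d e j k m n l (-c) *
      Fquad a b d e j k m n (muP f g h i j k m n p q r s)
        (-(lamP a b d e f g h i p q r s)) ≠ 0) :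
    ¬ SeparableMat (rhoM a b c d e f g h i j k l m n p q r s) := by
  have hD : f * s - i * p ≠ 0 := by
    intro h0; apply hcond; rw [h0]; ring
  have hG : g * r - h * q ≠ 0 := by
    intro h0; apply hcond; rw [h0]; ring
  have hF2 : Fquad a b d e j k m n (muP f g h i j k m n p q r s)
        (-(lamP a b d e f g h i p q r s)) ≠ 0 := by
    intro h0; apply hcond; rw [h0]; ring
  have hF2' : (a*e - b*d) * (f*(m*r-n*q)+g*(n*p-k*s)+h*(j*s-m*p)+i*(k*q-j*r))^2
        + (a*n+e*j-b*m-d*k) * (f*(m*r-n*q)+g*(n*p-k*s)+h*(j*s-m*p)+i*(k*q-j*r))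
            * (-(a*(h*s-i*r)+b*(i*q-g*s)+d*(f*r-h*p)+e*(g*p-f*q)))
        + (j*n-k*m) * (-(a*(h*s-i*r)+b*(i*q-g*s)+d*(f*r-h*p)+e*(g*p-f*q)))^2 ≠ 0 := by
    intro h0; apply hF2; rw [Fquad, muP, lamP]; linear_combination h0
  rintro ⟨tn, X, Y, hρ⟩
  -- N is positive
  have hfi : f ≠ 0 ∨ i ≠ 0 := by
    by_contra hfi
    push_neg at hfi
    exact hD (by rw [hfi.1, hfi.2]; ring)
  have hN : 0 < Nval a b c d e f g h i j k l m n p q r s := by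
    rw [Nval]
    apply Finset.sum_pos' (fun z _ => by positivity)
    rcases hfi with hf | hi
    · refine ⟨(1,0), Finset.mem_univ _, ?_⟩
      have h1 : evenVec f g h i (1,0) = f := rfl
      have h2 : 0 < ‖evenVec f g h i (1,0)‖ ^ 2 := by rw [h1]; exact pow_pos (norm_pos_iff.mpr hf) 2
      linarith [h2, sq_nonneg ‖oddVec a b c d e (1,0)‖, sq_nonneg ‖oddVec j k l m n (1,0)‖,
        sq_nonneg ‖evenVec p q r s (1,0)‖]
    · refine ⟨(1,2), Finset.mem_univ _, ?_⟩
      have h1 : evenVec f g h i (1,2) = i := rfl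
      have h2 : 0 < ‖evenVec f g h i (1,2)‖ ^ 2 := by rw [h1]; exact pow_pos (norm_pos_iff.mpr hi) 2
      linarith [h2, sq_nonneg ‖oddVec a b c d e (1,2)‖, sq_nonneg ‖oddVec j k l m n (1,2)‖,
        sq_nonneg ‖evenVec p q r s (1,2)‖]
  have hNne : ((Nval a b c d e f g h i j k l m n p q r s : ℝ) : ℂ) ≠ 0 :=
    Complex.ofReal_ne_zero.mpr (ne_of_gt hN)
  -- key quadratic argument: orthogonality transfers to the product vectors
  have key : ∀ u : Fin 3 × Fin 3 → ℂ,
      (∑ z, conj (u z) * oddVec a b c d e z) = 0 →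
      (∑ z, conj (u z) * evenVec f g h i z) = 0 →
      (∑ z, conj (u z) * oddVec j k l m n z) = 0 →
      (∑ z, conj (u z) * evenVec p q r s z) = 0 →
      ∀ t, (∑ z, conj (u z) * tp (X t) (Y t) z) = 0 := by
    intro u h1 h2 h3 h4
    have hQ : (∑ z, ∑ w, conj (u z) * rhoM a b c d e f g h i j k l m n p q r s z w * u w)
        = ∑ z, ∑ w, conj (u z) *
            (∑ t : Fin tn, Matrix.of fun u' w' => tp (X t) (Y t) u' * conj (tp (X t) (Y t) w')) z w
            * u w := by rw [hρ]
    have hL : (∑ z, ∑ w, conj (u z) * rhoM a b c d e f g h i j k l m n p q r s z w * u w) = 0 := by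
      have expand : ∀ z w : Fin 3 × Fin 3,
          conj (u z) * rhoM a b c d e f g h i j k l m n p q r s z w * u w
          = ((Nval a b c d e f g h i j k l m n p q r s : ℝ) : ℂ)⁻¹ *
              (conj (u z) * (oddVec a b c d e z * conj (oddVec a b c d e w)) * u w)
          + ((Nval a b c d e f g h i j k l m n p q r s : ℝ) : ℂ)⁻¹ *
              (conj (u z) * (evenVec f g h i z * conj (evenVec f g h i w)) * u w)
          + ((Nval a b c d e f g h i j k l m n p q r s : ℝ) : ℂ)⁻¹ *
              (conj (u z) * (oddVec j k l m n z * conj (oddVec j k l m n w)) * u w)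
          + ((Nval a b c d e f g h i j k l m n p q r s : ℝ) : ℂ)⁻¹ *
              (conj (u z) * (evenVec p q r s z * conj (evenVec p q r s w)) * u w) := by
        intro z w
        simp only [rhoM, sigmaM, Matrix.smul_apply, Matrix.of_apply, smul_eq_mul]
        ring
      simp_rw [expand, Finset.sum_add_distrib, ← Finset.mul_sum]
      rw [quad_eval, quad_eval, quad_eval, quad_eval, h1, h2, h3, h4]
      simp
    rw [hL] at hQ
    have hR : (∑ z, ∑ w, conj (u z) *
            (∑ t : Fin tn, Matrix.of fun u' w' => tp (X t) (Y t) u' * conj (tp (X t) (Y t) w')) z w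
            * u w)
        = ∑ t : Fin tn, (∑ z, conj (u z) * tp (X t) (Y t) z)
            * conj (∑ z, conj (u z) * tp (X t) (Y t) z) := by
      have step : ∀ zz ww : Fin 3 × Fin 3, conj (u zz) *
            (∑ t : Fin tn, Matrix.of fun u' w' => tp (X t) (Y t) u' * conj (tp (X t) (Y t) w')) zz ww
            * u ww
          = ∑ t : Fin tn, conj (u zz) * (tp (X t) (Y t) zz * conj (tp (X t) (Y t) ww)) * u ww := by
        intro zz ww
        simp only [Matrix.sum_apply, Matrix.of_apply, Finset.mul_sum, Finset.sum_mul]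
      simp_rw [step]
      calc ∑ z, ∑ w, ∑ t : Fin tn,
              conj (u z) * (tp (X t) (Y t) z * conj (tp (X t) (Y t) w)) * u w
          = ∑ z, ∑ t : Fin tn, ∑ w,
              conj (u z) * (tp (X t) (Y t) z * conj (tp (X t) (Y t) w)) * u w :=
            Finset.sum_congr rfl fun z _ => Finset.sum_comm
        _ = ∑ t : Fin tn, ∑ z, ∑ w,
              conj (u z) * (tp (X t) (Y t) z * conj (tp (X t) (Y t) w)) * u w :=
            Finset.sum_comm
        _ = _ := Finset.sum_congr rfl fun t _ => quad_eval u (tp (X t) (Y t))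
    rw [hR] at hQ
    simp_rw [Complex.mul_conj] at hQ
    have hQ' : ∑ t : Fin tn, Complex.normSq (∑ z, conj (u z) * tp (X t) (Y t) z) = 0 := by
      have := hQ.symm
      push_cast at this
      exact_mod_cast this
    intro t
    have := (Finset.sum_eq_zero_iff_of_nonneg
      (fun t' _ => Complex.normSq_nonneg _)).mp hQ' t (Finset.mem_univ t)
    exact Complex.normSq_eq_zero.mp this
  -- each product vector lies in the span of the four checkerboard vectors
  have hprod : ∀ t, ∃ cc : Fin 4 → ℂ, ∀ z₀ : Fin 3 × Fin 3,
      cc 0 * oddVec a b c d e z₀ + cc 1 * evenVec f g h i z₀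
        + cc 2 * oddVec j k l m n z₀ + cc 3 * evenVec p q r s z₀ = tp (X t) (Y t) z₀ := by
    intro t
    have hmem : tp (X t) (Y t) ∈ Submodule.span ℂ (Set.range
        ![oddVec a b c d e, evenVec f g h i, oddVec j k l m n, evenVec p q r s]) := by
      by_contra hx
      obtain ⟨φ, hφx, hφbot⟩ := Submodule.exists_dual_map_eq_bot_of_notMem hx inferInstance
      have hφv : ∀ i' : Fin 4, φ (![oddVec a b c d e, evenVec f g h i, oddVec j k l m n,
          evenVec p q r s] i') = 0 := by
        intro i'
        have hmm : φ (![oddVec a b c d e, evenVec f g h i, oddVec j k l m n,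
            evenVec p q r s] i') ∈ (Submodule.span ℂ (Set.range
            ![oddVec a b c d e, evenVec f g h i, oddVec j k l m n, evenVec p q r s])).map φ :=
          ⟨_, Submodule.subset_span ⟨i', rfl⟩, rfl⟩
        rw [hφbot] at hmm
        simpa using hmm
      set u : Fin 3 × Fin 3 → ℂ :=
        fun z => conj (φ (fun j => if z = j then 1 else 0)) with hu
      have hrep : ∀ v : Fin 3 × Fin 3 → ℂ, ∑ z, conj (u z) * v z = φ v := by
        intro v
        conv_rhs => rw [pi_eq_sum_univ v, map_sum]
        refine Finset.sum_congr rfl fun z _ => ?_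
        rw [map_smul, hu]
        simp only [Complex.conj_conj, smul_eq_mul]
        ring
      have h0 := key u (by rw [hrep]; simpa using hφv 0) (by rw [hrep]; simpa using hφv 1)
        (by rw [hrep]; simpa using hφv 2) (by rw [hrep]; simpa using hφv 3) t
      rw [hrep] at h0
      exact hφx h0
    rw [Submodule.mem_span_range_iff_exists_fun] at hmem
    obtain ⟨cc, hcc⟩ := hmem
    rw [Fin.sum_univ_four] at hcc
    refine ⟨cc, fun z₀ => ?_⟩
    have h := congrFun hcc z₀
    simpa using h
  -- the algebraic core: the relevant coordinates of every product vector vanish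
  have hvanish : ∀ t, X t 1 * Y t 0 = 0 ∧ X t 1 * Y t 2 = 0 := by
    intro t
    obtain ⟨cc, hcc⟩ := hprod t
    have e00 : X t 0 * Y t 0 = cc 0 * a + cc 2 * j := by
      have h := hcc (0,0); simp (config := { decide := true }) [oddVec, evenVec, tp] at h; linear_combination -h
    have e10 : X t 1 * Y t 0 = cc 1 * f + cc 3 * p := by
      have h := hcc (1,0); simp (config := { decide := true }) [oddVec, evenVec, tp] at h; linear_combination -h
    have e20 : X t 2 * Y t 0 = cc 0 * b + cc 2 * k := by
      have h := hcc (2,0); simp (config := { decide := true }) [oddVec, evenVec, tp] at h; linear_combination -h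
    have e01 : X t 0 * Y t 1 = cc 1 * g + cc 3 * q := by
      have h := hcc (0,1); simp (config := { decide := true }) [oddVec, evenVec, tp] at h; linear_combination -h
    have e11 : X t 1 * Y t 1 = cc 0 * c + cc 2 * l := by
      have h := hcc (1,1); simp (config := { decide := true }) [oddVec, evenVec, tp] at h; linear_combination -h
    have e21 : X t 2 * Y t 1 = cc 1 * h + cc 3 * r := by
      have h' := hcc (2,1); simp (config := { decide := true }) [oddVec, evenVec, tp] at h'; linear_combination -h'
    have e02 : X t 0 * Y t 2 = cc 0 * d + cc 2 * m := by
      have h := hcc (0,2); simp (config := { decide := true }) [oddVec, evenVec, tp] at h; linear_combination -h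
    have e12 : X t 1 * Y t 2 = cc 1 * i + cc 3 * s := by
      have h := hcc (1,2); simp (config := { decide := true }) [oddVec, evenVec, tp] at h; linear_combination -h
    have e22 : X t 2 * Y t 2 = cc 0 * e + cc 2 * n := by
      have h := hcc (2,2); simp (config := { decide := true }) [oddVec, evenVec, tp] at h; linear_combination -h
    exact core_alg a b c d e f g h i j k l m n p q r s (cc 0) (cc 1) (cc 2) (cc 3)
      (X t 0) (X t 1) (X t 2) (Y t 0) (Y t 1) (Y t 2) hD hG hF2'
      e00 e10 e20 e01 e11 e21 e02 e12 e22
  -- contradiction: evaluate ρ at the diagonal entries ((1,0),(1,0)) and ((1,2),(1,2))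
  have hz10 : (∑ t : Fin tn, Matrix.of
      (fun u' w' => tp (X t) (Y t) u' * conj (tp (X t) (Y t) w'))) (1,0) (1,0) = (0:ℂ) := by
    rw [Matrix.sum_apply]
    refine Finset.sum_eq_zero fun t _ => ?_
    have : tp (X t) (Y t) (1,0) = 0 := (hvanish t).1
    simp [this]
  have hz12 : (∑ t : Fin tn, Matrix.of
      (fun u' w' => tp (X t) (Y t) u' * conj (tp (X t) (Y t) w'))) (1,2) (1,2) = (0:ℂ) := by
    rw [Matrix.sum_apply]
    refine Finset.sum_eq_zero fun t _ => ?_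
    have : tp (X t) (Y t) (1,2) = 0 := (hvanish t).2
    simp [this]
  have h10 := congrFun (congrFun hρ (1,0)) (1,0)
  have h12 := congrFun (congrFun hρ (1,2)) (1,2)
  rw [hz10] at h10
  rw [hz12] at h12
  simp only [rhoM, sigmaM, Matrix.smul_apply, Matrix.of_apply, smul_eq_mul] at h10 h12
  simp [oddVec, evenVec] at h10 h12
  have hfp : f * conj f + p * conj p = 0 := h10.resolve_left (ne_of_gt hN)
  have his : i * conj i + s * conj s = 0 := h12.resolve_left (ne_of_gt hN)
  rw [Complex.mul_conj, Complex.mul_conj] at hfp his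
  have hf0 : f = 0 := by
    have h' : Complex.normSq f + Complex.normSq p = 0 := by exact_mod_cast hfp
    have := Complex.normSq_nonneg f
    have := Complex.normSq_nonneg p
    exact Complex.normSq_eq_zero.mp (by linarith)
  have hi0 : i = 0 := by
    have h' : Complex.normSq i + Complex.normSq s = 0 := by exact_mod_cast his
    have := Complex.normSq_nonneg i
    have := Complex.normSq_nonneg s
    exact Complex.normSq_eq_zero.mp (by linarith)
  exact hD (by rw [hf0, hi0]; ring)
end
end

section
/- Let a,b,c,d,e,f,g,h,i,j,k,l,m,n,p,q,r,s be 18 complex numbers. If there exist vectors x, y ∈ ℂ³ and complex numbers A₁, A₂, A₃, A₄ such that x⊗y = A₁v₁ + A₂v₂ + A₃v₃ + A₄v₄, then F(A₁, A₃) = 0. -/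
open Complex ComplexConjugate
open scoped ComplexOrder

noncomputable section

theorem stmt2 (a b c d e f g h i j k l m n p q r s : ℂ)
    (x y : Fin 3 → ℂ) (A₁ A₂ A₃ A₄ : ℂ)
    (hxy : tp x y = A₁ • oddVec a b c d e + A₂ • evenVec f g h i
      + A₃ • oddVec j k l m n + A₄ • evenVec p q r s) :
    Fquad a b d e j k m n A₁ A₃ = 0 := by
  have h00 := congrFun hxy (0, 0)
  have h22 := congrFun hxy (2, 2)
  have h20 := congrFun hxy (2, 0)
  have h02 := congrFun hxy (0, 2)
  simp [tp, oddVec, evenVec, Prod.ext_iff] at h00 h22 h20 h02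
  unfold Fquad
  linear_combination (-(x 2 * y 2)) * h00 - (A₁ * a + A₃ * j) * h22
    + (x 0 * y 2) * h20 + (A₁ * b + A₃ * k) * h02
end
end

section
/- Let t, x, y be real numbers and a,b,c,f,j,k,l,m,p,s complex numbers with a ≠ 0, b ≠ 0, f ≠ 0, ak−bj ≠ 0. Define i = (t − sp*)/f*, n = (|a|²y − |b|²x − m*b*(ak−bj))/(a·(ak−bj)*), d = (x − mj*)/a*, e = (y − nk*)/b*, and, assuming fs−ip ≠ 0, define g = (s*(ac*+jl*) − p*(dc*+ml*))/(fs−ip)*, q = (f*(dc*+ml*) − i*(ac*+jl*))/(fs−ip)*, h = (s*(bc*+kl*) − p*(ec*+nl*))/(fs−ip)*, r = (f*(ec*+nl*) − i*(bc*+kl*))/(fs−ip)*. Assume moreover that (gr−hq)·F(l,−c)·F(μ,−λ) ≠ 0. Then the state ρ = (1/N) Σ_{t=1}^4 v_t v_t† is entangled and satisfies ρ^Γ = ρ; in particular ρ^Γ is positive semidefinite, i.e., ρ is a PPT state. -/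
open Complex ComplexConjugate
open scoped ComplexOrder

noncomputable section

/-- The partial transpose: (M^Γ)_{(i,j),(k,l)} = M_{(i,l),(k,j)}. -/
def ptrans (M : Matrix (Fin 3 × Fin 3) (Fin 3 × Fin 3) ℂ) :
    Matrix (Fin 3 × Fin 3) (Fin 3 × Fin 3) ℂ :=
  Matrix.of fun u w => M (u.1, w.2) (w.1, u.2)

/-! Partial transposition permutes the entries of `σ = Σ vₜ vₜ†`, and the formulas defining
`d, e, i, n` (which make `d a* + m j*`, `e b* + n k*`, `i f* + s p*` real and give one more
Gram identity) and `g, q, h, r` (Cramer's rule) say exactly that the permuted entries agree;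
hence `ρ^Γ = ρ ≥ 0`.

If `ρ = Σ (x⊗y)(x⊗y)†`, the range criterion puts every `x⊗y` in `span {v₁, v₂, v₃, v₄}`, and
one of them has a nonzero `(0,0)` entry. Writing `x⊗y = α v₁ + β v₂ + γ v₃ + δ v₄`, the vanishing
`2 × 2` minors of `x⊗y` give `F(α, γ) = 0` and `(α c + γ l)(λ α + μ γ) = 0`, so `(α, γ)` is a
zero of `F` on the line through `(l, -c)` or through `(μ, -λ)`. Since `F` does not vanish there,
`α = γ = 0`, contradicting `(x⊗y)(0,0) = α a + γ j ≠ 0`. -/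

open Matrix

section RangeCriterion

variable {𝕜 ι κ n : Type*} [RCLike 𝕜] [Fintype ι] [Fintype κ] [Fintype n]

theorem star_dotProduct_vecMulVec_mulVec (u w : n → 𝕜) :
    star w ⬝ᵥ (vecMulVec u (star u) *ᵥ w) = ((‖star u ⬝ᵥ w‖ ^ 2 : ℝ) : 𝕜) := by
  have hw : star w ⬝ᵥ u = star (star u ⬝ᵥ w) := by rw [← star_dotProduct_star, star_star]
  rw [vecMulVec_mulVec, op_smul_eq_smul, dotProduct_smul, smul_eq_mul, hw, RCLike.star_def,
    RCLike.mul_conj]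
  norm_cast

theorem star_dotProduct_eq_zero_of_smul_sum_vecMulVec_eq (c : 𝕜) {v : ι → n → 𝕜}
    {z : κ → n → 𝕜}
    (h : c • ∑ s, vecMulVec (v s) (star (v s)) = ∑ t, vecMulVec (z t) (star (z t)))
    (w : n → 𝕜) (hw : ∀ s, star (v s) ⬝ᵥ w = 0) (t : κ) : star (z t) ⬝ᵥ w = 0 := by
  have hsum : ∑ t, ‖star (z t) ⬝ᵥ w‖ ^ 2 = 0 := by
    have := congrArg (fun M => star w ⬝ᵥ (M *ᵥ w)) h
    simp only [smul_mulVec, sum_mulVec, dotProduct_smul, dotProduct_sum,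
      star_dotProduct_vecMulVec_mulVec, hw, norm_zero, ne_eq, OfNat.ofNat_ne_zero,
      not_false_eq_true, zero_pow, RCLike.ofReal_zero, Finset.sum_const_zero, smul_zero] at this
    exact_mod_cast this.symm
  rw [Finset.sum_eq_zero_iff_of_nonneg fun _ _ => by positivity] at hsum
  simpa using hsum t (Finset.mem_univ t)

theorem exists_ne_zero_of_smul_sum_vecMulVec_eq {c : 𝕜} (hc : c ≠ 0) {v : ι → n → 𝕜}
    {z : κ → n → 𝕜}
    (h : c • ∑ s, vecMulVec (v s) (star (v s)) = ∑ t, vecMulVec (z t) (star (z t)))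
    [DecidableEq n] (i : n) (s : ι) (hv : v s i ≠ 0) : ∃ t, z t i ≠ 0 := by
  by_contra! hz
  have h' : c⁻¹ • ∑ t, vecMulVec (z t) (star (z t)) = ∑ s, vecMulVec (v s) (star (v s)) := by
    rw [← h, smul_smul, inv_mul_cancel₀ hc, one_smul]
  have := star_dotProduct_eq_zero_of_smul_sum_vecMulVec_eq c⁻¹ h' (Pi.single i 1)
    (fun t => by simp [hz t]) s
  simp_all

end RangeCriterion

section Cofactor

variable {K ι : Type*} [Field K] [Fintype ι] [DecidableEq ι]

def cofactorVec (u v : ι → K) (i₀ i₁ i : ι) : ι → K :=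
  Pi.single i₀ (u i₁ * v i - u i * v i₁) + Pi.single i₁ (u i * v i₀ - u i₀ * v i)
    + Pi.single i (u i₀ * v i₁ - u i₁ * v i₀)

theorem cofactorVec_dotProduct (u v z : ι → K) (i₀ i₁ i : ι) :
    cofactorVec u v i₀ i₁ i ⬝ᵥ z = z i₀ * (u i₁ * v i - u i * v i₁)
      + z i₁ * (u i * v i₀ - u i₀ * v i) + z i * (u i₀ * v i₁ - u i₁ * v i₀) := by
  simp only [cofactorVec, add_dotProduct, single_dotProduct]
  ring

theorem cofactorVec_dotProduct_left (u v : ι → K) (i₀ i₁ i : ι) :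
    cofactorVec u v i₀ i₁ i ⬝ᵥ u = 0 := by
  rw [cofactorVec_dotProduct]; ring

theorem cofactorVec_dotProduct_right (u v : ι → K) (i₀ i₁ i : ι) :
    cofactorVec u v i₀ i₁ i ⬝ᵥ v = 0 := by
  rw [cofactorVec_dotProduct]; ring

theorem cofactorVec_dotProduct_of_eq_zero (u v z : ι → K) {i₀ i₁ i : ι} (h₀ : z i₀ = 0)
    (h₁ : z i₁ = 0) (h : z i = 0) : cofactorVec u v i₀ i₁ i ⬝ᵥ z = 0 := by
  simp [cofactorVec_dotProduct, h₀, h₁, h]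

theorem exists_forall_eq_of_cofactorVec_dotProduct_eq_zero (u v z : ι → K) {i₀ i₁ : ι}
    (hD : u i₀ * v i₁ - u i₁ * v i₀ ≠ 0) :
    ∃ α γ : K, ∀ i, cofactorVec u v i₀ i₁ i ⬝ᵥ z = 0 → z i = α * u i + γ * v i := by
  refine ⟨(z i₀ * v i₁ - z i₁ * v i₀) / (u i₀ * v i₁ - u i₁ * v i₀),
    (u i₀ * z i₁ - u i₁ * z i₀) / (u i₀ * v i₁ - u i₁ * v i₀), fun i hi => ?_⟩
  rw [cofactorVec_dotProduct] at hi
  rw [div_mul_eq_mul_div, div_mul_eq_mul_div, ← add_div, eq_div_iff hD]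
  linear_combination hi

end Cofactor

theorem eq_add_of_cramer {K : Type*} [Field K] {f i p s A D g q : K} (hdet : f * s - i * p ≠ 0)
    (hg : g = (s * A - p * D) / (f * s - i * p)) (hq : q = (f * D - i * A) / (f * s - i * p)) :
    A = g * f + q * p ∧ D = g * i + q * s := by
  subst hg hq
  constructor <;> rw [eq_comm, div_mul_eq_mul_div, div_mul_eq_mul_div, ← add_div, div_eq_iff hdet]
    <;> ring

theorem mul_conj_add_mul_conj_swap {a b c d e f g h : ℂ}
    (H : a * conj b + c * conj d = e * conj f + g * conj h) :
    b * conj a + d * conj c = f * conj e + h * conj g := by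
  have := congrArg conj H
  simp only [map_add, map_mul, conj_conj] at this
  linear_combination this

theorem mul_conj_add_mul_conj_comm_of_eq_div {a d j m : ℂ} {x : ℝ} (ha : a ≠ 0)
    (hd : d = (x - m * conj j) / conj a) :
    a * conj d + j * conj m = d * conj a + m * conj j := by
  have hreal : d * conj a + m * conj j = x := by
    rw [hd, div_mul_cancel₀ _ ((map_ne_zero conj).mpr ha)]
    ring
  have := congrArg conj hreal
  simp only [map_add, map_mul, conj_conj, conj_ofReal] at this
  linear_combination this - hreal

theorem mul_conj_add_mul_conj_cross_of_eq_div {a b j k d e m n : ℂ} {x y : ℝ} (ha : a ≠ 0)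
    (hb : b ≠ 0) (hak : a * k - b * j ≠ 0)
    (hn : n = ((normSq a : ℂ) * (y : ℂ) - (normSq b : ℂ) * (x : ℂ)
      - conj m * conj b * (a * k - b * j)) / (a * conj (a * k - b * j)))
    (hd : d = ((x : ℂ) - m * conj j) / conj a) (he : e = ((y : ℂ) - n * conj k) / conj b) :
    a * conj e + j * conj n = d * conj b + m * conj k := by
  have Hd : d * conj a = x - m * conj j := by
    rw [hd, div_mul_cancel₀ _ ((map_ne_zero conj).mpr ha)]
  have He : e * conj b = y - n * conj k := by
    rw [he, div_mul_cancel₀ _ ((map_ne_zero conj).mpr hb)]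
  have Hn : n * (a * conj (a * k - b * j)) = (normSq a : ℂ) * y - (normSq b : ℂ) * x
      - conj m * conj b * (a * k - b * j) := by
    rw [hn, div_mul_cancel₀ _ (mul_ne_zero ha ((map_ne_zero conj).mpr hak))]
  have He' := congrArg conj He
  have Hn' := congrArg conj Hn
  rw [← mul_conj, ← mul_conj] at Hn'
  simp only [map_sub, map_mul, conj_conj, conj_ofReal] at He' Hn'
  apply mul_right_cancel₀ (mul_ne_zero ((map_ne_zero conj).mpr ha) hb)
  linear_combination (a * conj a) * He' - Hn' - b * conj b * Hd

theorem ptrans_smul (c : ℂ) (M : Matrix (Fin 3 × Fin 3) (Fin 3 × Fin 3) ℂ) :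
    ptrans (c • M) = c • ptrans M :=
  rfl

set_option maxHeartbeats 1000000 in
/-- Partial transposition swaps entries of `σ` whose equality is one of these identities or its
conjugate. -/
theorem ptrans_sigmaM_eq_self {a b c d e f g h i j k l m n p q r s : ℂ}
    (h₁ : a * conj c + j * conj l = g * conj f + q * conj p)
    (h₂ : b * conj c + k * conj l = h * conj f + r * conj p)
    (h₃ : d * conj c + m * conj l = g * conj i + q * conj s)
    (h₄ : e * conj c + n * conj l = h * conj i + r * conj s)
    (h₅ : a * conj d + j * conj m = d * conj a + m * conj j)
    (h₆ : a * conj e + j * conj n = d * conj b + m * conj k)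
    (h₇ : b * conj e + k * conj n = e * conj b + n * conj k)
    (h₈ : f * conj i + p * conj s = i * conj f + s * conj p) :
    ptrans (sigmaM a b c d e f g h i j k l m n p q r s)
      = sigmaM a b c d e f g h i j k l m n p q r s := by
  have := mul_conj_add_mul_conj_swap h₁
  have := mul_conj_add_mul_conj_swap h₂
  have := mul_conj_add_mul_conj_swap h₃
  have := mul_conj_add_mul_conj_swap h₄
  have := mul_conj_add_mul_conj_swap h₆
  ext ⟨u₁, u₂⟩ ⟨w₁, w₂⟩
  fin_cases u₁ <;> fin_cases u₂ <;> fin_cases w₁ <;> fin_cases w₂ <;>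
    simp [ptrans, sigmaM, oddVec, evenVec, Prod.ext_iff] <;>
    first | assumption | exact Eq.symm (by assumption)

def stateVecs (a b c d e f g h i j k l m n p q r s : ℂ) : Fin 4 → Fin 3 × Fin 3 → ℂ :=
  ![oddVec a b c d e, evenVec f g h i, oddVec j k l m n, evenVec p q r s]

theorem sigmaM_eq_sum (a b c d e f g h i j k l m n p q r s : ℂ) :
    sigmaM a b c d e f g h i j k l m n p q r s
      = ∑ t, vecMulVec (stateVecs a b c d e f g h i j k l m n p q r s t)
          (star (stateVecs a b c d e f g h i j k l m n p q r s t)) := by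
  ext u w
  simp [sigmaM, stateVecs, Fin.sum_univ_four, vecMulVec_apply]

theorem Nval_pos {a : ℂ} (ha : a ≠ 0) (b c d e f g h i j k l m n p q r s : ℂ) :
    0 < Nval a b c d e f g h i j k l m n p q r s :=
  Finset.sum_pos' (fun _ _ => by positivity)
    ⟨(0, 0), Finset.mem_univ _, by simp only [oddVec]; positivity⟩

theorem posSemidef_rhoM (a b c d e f g h i j k l m n p q r s : ℂ) :
    (rhoM a b c d e f g h i j k l m n p q r s).PosSemidef := by
  have hN : 0 ≤ Nval a b c d e f g h i j k l m n p q r s := by unfold Nval; positivity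
  rw [rhoM, sigmaM_eq_sum]
  exact (posSemidef_sum _ fun t _ => posSemidef_vecMulVec_self_star _).smul
    (inv_nonneg.mpr (zero_le_real.mpr hN))

/-- The odd and even checkerboard parts are each spanned by two of the `v_t`, so the orthogonal
complement of the `v_t` is spanned by the cofactor vectors of these two pairs. -/
theorem exists_eq_of_forall_orthogonal {a b c d e f g h i j k l m n p q r s : ℂ}
    (hak : a * k - b * j ≠ 0) (hgr : g * r - h * q ≠ 0) (z : Fin 3 × Fin 3 → ℂ)
    (hz : ∀ w, (∀ t, star (stateVecs a b c d e f g h i j k l m n p q r s t) ⬝ᵥ w = 0) →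
      star z ⬝ᵥ w = 0) :
    ∃ α β γ δ : ℂ, z = α • oddVec a b c d e + β • evenVec f g h i + γ • oddVec j k l m n
      + δ • evenVec p q r s := by
  have horth : ∀ x, x ⬝ᵥ oddVec a b c d e = 0 → x ⬝ᵥ evenVec f g h i = 0 →
      x ⬝ᵥ oddVec j k l m n = 0 → x ⬝ᵥ evenVec p q r s = 0 → x ⬝ᵥ z = 0 := by
    intro x h₀ h₁ h₂ h₃
    have := hz (star x) fun t => by
      fin_cases t <;> simp [stateVecs, star_dotProduct_star, h₀, h₁, h₂, h₃]
    rwa [star_dotProduct_star, star_eq_zero] at this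
  obtain ⟨α, γ, hodd⟩ := exists_forall_eq_of_cofactorVec_dotProduct_eq_zero
    (oddVec a b c d e) (oddVec j k l m n) z (i₀ := (0, 0)) (i₁ := (2, 0))
    (by simpa [oddVec] using hak)
  obtain ⟨β, δ, heven⟩ := exists_forall_eq_of_cofactorVec_dotProduct_eq_zero
    (evenVec f g h i) (evenVec p q r s) z (i₀ := (0, 1)) (i₁ := (2, 1))
    (by simpa [evenVec] using hgr)
  refine ⟨α, β, γ, δ, funext fun u => ?_⟩
  have hparity : (evenVec f g h i u = 0 ∧ evenVec p q r s u = 0)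
      ∨ (oddVec a b c d e u = 0 ∧ oddVec j k l m n u = 0) := by
    fin_cases u <;> simp [oddVec, evenVec]
  rcases hparity with ⟨h₁, h₂⟩ | ⟨h₁, h₂⟩
  · have := hodd u <| horth _ (cofactorVec_dotProduct_left _ _ _ _ _)
      (cofactorVec_dotProduct_of_eq_zero _ _ _ (by simp [evenVec]) (by simp [evenVec]) h₁)
      (cofactorVec_dotProduct_right _ _ _ _ _)
      (cofactorVec_dotProduct_of_eq_zero _ _ _ (by simp [evenVec]) (by simp [evenVec]) h₂)
    simp [this, h₁, h₂]
  · have := heven u <| horth _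
      (cofactorVec_dotProduct_of_eq_zero _ _ _ (by simp [oddVec]) (by simp [oddVec]) h₁)
      (cofactorVec_dotProduct_left _ _ _ _ _)
      (cofactorVec_dotProduct_of_eq_zero _ _ _ (by simp [oddVec]) (by simp [oddVec]) h₂)
      (cofactorVec_dotProduct_right _ _ _ _ _)
    simp [this, h₁, h₂]

theorem Fquad_eq_sub (a b d e j k m n α γ : ℂ) :
    Fquad a b d e j k m n α γ
      = (α * a + γ * j) * (α * e + γ * n) - (α * b + γ * k) * (α * d + γ * m) := by
  unfold Fquad
  ring

/-- `F` is a binary quadratic form, so on the line through `(u, w)` it is `t² F(u, w)`. -/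
theorem eq_zero_of_Fquad_eq_zero_of_mul_eq {a b d e j k m n u w α γ : ℂ}
    (hF : Fquad a b d e j k m n u w ≠ 0) (h₀ : Fquad a b d e j k m n α γ = 0)
    (hpar : α * w = γ * u) : α = 0 ∧ γ = 0 := by
  unfold Fquad at h₀
  have hα : Fquad a b d e j k m n u w * α ^ 2 = 0 := by
    unfold Fquad
    linear_combination u ^ 2 * h₀
      + ((a * n + e * j - b * m - d * k) * α * u + (j * n - k * m) * (w * α + γ * u)) * hpar
  have hγ : Fquad a b d e j k m n u w * γ ^ 2 = 0 := by
    unfold Fquad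
    linear_combination w ^ 2 * h₀
      - ((a * n + e * j - b * m - d * k) * γ * w + (a * e - b * d) * (w * α + γ * u)) * hpar
  exact ⟨pow_eq_zero_iff two_ne_zero |>.mp ((mul_eq_zero.mp hα).resolve_left hF),
    pow_eq_zero_iff two_ne_zero |>.mp ((mul_eq_zero.mp hγ).resolve_left hF)⟩

theorem eq_zero_of_tp_eq_add {a b c d e f g h i j k l m n p q r s : ℂ}
    (hF₁ : Fquad a b d e j k m n l (-c) ≠ 0)
    (hF₂ : Fquad a b d e j k m n (muP f g h i j k m n p q r s)
      (-(lamP a b d e f g h i p q r s)) ≠ 0)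
    {x y : Fin 3 → ℂ} {α β γ δ : ℂ}
    (hxy : tp x y = α • oddVec a b c d e + β • evenVec f g h i + γ • oddVec j k l m n
      + δ • evenVec p q r s) :
    α = 0 ∧ γ = 0 := by
  have entry := fun u₁ u₂ => congrFun hxy (u₁, u₂)
  have h₀₀ := entry 0 0
  have h₂₀ := entry 2 0
  have h₁₁ := entry 1 1
  have h₀₂ := entry 0 2
  have h₂₂ := entry 2 2
  have h₁₀ := entry 1 0
  have h₀₁ := entry 0 1
  have h₂₁ := entry 2 1
  have h₁₂ := entry 1 2
  simp [tp, oddVec, evenVec] at h₀₀ h₂₀ h₁₁ h₀₂ h₂₂ h₁₀ h₀₁ h₂₁ h₁₂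
  have hF : Fquad a b d e j k m n α γ = 0 := by
    rw [Fquad_eq_sub, ← h₀₀, ← h₂₂, ← h₂₀, ← h₀₂]; ring
  -- the 2 × 2 minors of the rank-one matrix `(x i * y j)` vanish
  have hE₁ : (β * g + δ * q) * (β * f + δ * p) = (α * a + γ * j) * (α * c + γ * l) := by
    rw [← h₀₁, ← h₁₀, ← h₀₀, ← h₁₁]; ring
  have hE₂ : (β * g + δ * q) * (β * i + δ * s) = (α * d + γ * m) * (α * c + γ * l) := by
    rw [← h₀₁, ← h₁₂, ← h₀₂, ← h₁₁]; ring
  have hE₃ : (β * h + δ * r) * (β * f + δ * p) = (α * b + γ * k) * (α * c + γ * l) := by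
    rw [← h₂₁, ← h₁₀, ← h₂₀, ← h₁₁]; ring
  have hE₄ : (β * h + δ * r) * (β * i + δ * s) = (α * e + γ * n) * (α * c + γ * l) := by
    rw [← h₂₁, ← h₁₂, ← h₂₂, ← h₁₁]; ring
  have key : (α * c + γ * l)
      * (lamP a b d e f g h i p q r s * α + muP f g h i j k m n p q r s * γ) = 0 := by
    unfold lamP muP
    linear_combination (i * r - h * s) * hE₁ + (h * p - f * r) * hE₂ + (g * s - i * q) * hE₃
      + (f * q - g * p) * hE₄
  rcases mul_eq_zero.mp key with hcl | hlm
  · exact eq_zero_of_Fquad_eq_zero_of_mul_eq hF₁ hF (by linear_combination -hcl)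
  · exact eq_zero_of_Fquad_eq_zero_of_mul_eq hF₂ hF (by linear_combination -hlm)

theorem not_separableMat_smul_sigmaM {ν : ℂ} (hν : ν ≠ 0) {a b c d e f g h i j k l m n p q r s : ℂ}
    (ha : a ≠ 0) (hak : a * k - b * j ≠ 0) (hgr : g * r - h * q ≠ 0)
    (hF₁ : Fquad a b d e j k m n l (-c) ≠ 0)
    (hF₂ : Fquad a b d e j k m n (muP f g h i j k m n p q r s)
      (-(lamP a b d e f g h i p q r s)) ≠ 0) :
    ¬ SeparableMat (ν • sigmaM a b c d e f g h i j k l m n p q r s) := by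
  rintro ⟨N, x, y, hsep⟩
  rw [sigmaM_eq_sum] at hsep
  change _ = ∑ t, vecMulVec (tp (x t) (y t)) (star (tp (x t) (y t))) at hsep
  obtain ⟨t, ht⟩ := exists_ne_zero_of_smul_sum_vecMulVec_eq hν hsep (0, 0) 0
    (by simpa [stateVecs, oddVec] using ha)
  obtain ⟨α, β, γ, δ, hspan⟩ := exists_eq_of_forall_orthogonal hak hgr _
    fun w hw => star_dotProduct_eq_zero_of_smul_sum_vecMulVec_eq ν hsep w hw t
  obtain ⟨rfl, rfl⟩ := eq_zero_of_tp_eq_add hF₁ hF₂ hspan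
  exact ht (by simp [hspan, evenVec])

theorem stmt4 (t x y : ℝ) (a b c f j k l m p s : ℂ)
    (ha : a ≠ 0) (hb : b ≠ 0) (hf : f ≠ 0) (hak : a * k - b * j ≠ 0)
    (i n d e g q h r : ℂ)
    (hi : i = ((t : ℂ) - s * conj p) / conj f)
    (hn : n = ((Complex.normSq a : ℂ) * (y : ℂ) - (Complex.normSq b : ℂ) * (x : ℂ)
      - conj m * conj b * (a * k - b * j)) / (a * conj (a * k - b * j)))
    (hd : d = ((x : ℂ) - m * conj j) / conj a)
    (he : e = ((y : ℂ) - n * conj k) / conj b)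
    (hfs : f * s - i * p ≠ 0)
    (hg : g = (conj s * (a * conj c + j * conj l) - conj p * (d * conj c + m * conj l))
      / conj (f * s - i * p))
    (hq : q = (conj f * (d * conj c + m * conj l) - conj i * (a * conj c + j * conj l))
      / conj (f * s - i * p))
    (hh : h = (conj s * (b * conj c + k * conj l) - conj p * (e * conj c + n * conj l))
      / conj (f * s - i * p))
    (hr : r = (conj f * (e * conj c + n * conj l) - conj i * (b * conj c + k * conj l))
      / conj (f * s - i * p))
    (hcond : (g * r - h * q) * Fquad a b d e j k m n l (-c) *
      Fquad a b d e j k m n (muP f g h i j k m n p q r s)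
        (-(lamP a b d e f g h i p q r s)) ≠ 0) :
    ¬ SeparableMat (rhoM a b c d e f g h i j k l m n p q r s) ∧
    ptrans (rhoM a b c d e f g h i j k l m n p q r s)
      = rhoM a b c d e f g h i j k l m n p q r s ∧
    (ptrans (rhoM a b c d e f g h i j k l m n p q r s)).PosSemidef := by
  have hgr := left_ne_zero_of_mul (left_ne_zero_of_mul hcond)
  have hF₁ := right_ne_zero_of_mul (left_ne_zero_of_mul hcond)
  have hF₂ := right_ne_zero_of_mul hcond
  have hdet : conj f * conj s - conj i * conj p ≠ 0 := by
    simpa using (map_ne_zero conj).mpr hfs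
  rw [map_sub, map_mul, map_mul] at hg hq hh hr
  obtain ⟨h₁, h₃⟩ := eq_add_of_cramer hdet hg hq
  obtain ⟨h₂, h₄⟩ := eq_add_of_cramer hdet hh hr
  have hΓ : ptrans (rhoM a b c d e f g h i j k l m n p q r s)
      = rhoM a b c d e f g h i j k l m n p q r s := by
    rw [rhoM, ptrans_smul, ptrans_sigmaM_eq_self h₁ h₂ h₃ h₄
      (mul_conj_add_mul_conj_comm_of_eq_div ha hd)
      (mul_conj_add_mul_conj_cross_of_eq_div ha hb hak hn hd he)
      (mul_conj_add_mul_conj_comm_of_eq_div hb he) (mul_conj_add_mul_conj_comm_of_eq_div hf hi)]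
  refine ⟨not_separableMat_smul_sigmaM ?_ ha hak hgr hF₁ hF₂, hΓ, hΓ ▸ posSemidef_rhoM ..⟩
  exact inv_ne_zero (ofReal_ne_zero.mpr (Nval_pos ha ..).ne')
end
end

section
/- Let t, x, y be real numbers and a,b,c,f,j,k,l,m,p,s complex numbers with a ≠ 0, b ≠ 0, f ≠ 0, ak−bj ≠ 0. Define i = (t − sp*)/f*, n = (|a|²y − |b|²x − m*b*(ak−bj))/(a·(ak−bj)*), d = (x − mj*)/a*, e = (y − nk*)/b*, and, assuming fs−ip ≠ 0, define g = (s*(ac*+jl*) − p*(dc*+ml*))/(fs−ip)*, q = (f*(dc*+ml*) − i*(ac*+jl*))/(fs−ip)*, h = (s*(bc*+kl*) − p*(ec*+nl*))/(fs−ip)*, r = (f*(ec*+nl*) − i*(bc*+kl*))/(fs−ip)*. Then the unnormalized matrix σ = Σ_{t=1}^4 v_t v_t† is fixed by the partial transposition: σ^Γ = σ. -/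
open Complex ComplexConjugate
open scoped ComplexOrder

noncomputable section

set_option maxHeartbeats 2000000 in
/-- Auxiliary: the entrywise identities imply PPT-invariance. -/
theorem ptrans_eq_of_identities (a b c d e f g h i j k l m n p q r s : ℂ)
    (E1 : f * conj i + p * conj s = i * conj f + s * conj p)
    (E2 : a * conj d + j * conj m = d * conj a + m * conj j)
    (E3 : b * conj e + k * conj n = e * conj b + n * conj k)
    (E4 : a * conj e + j * conj n = d * conj b + m * conj k)
    (E4c : e * conj a + n * conj j = b * conj d + k * conj m)
    (E5 : conj f * g + conj p * q = a * conj c + j * conj l)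
    (E5c : f * conj g + p * conj q = conj a * c + conj j * l)
    (E6 : conj f * h + conj p * r = b * conj c + k * conj l)
    (E6c : f * conj h + p * conj r = conj b * c + conj k * l)
    (E7 : conj i * g + conj s * q = d * conj c + m * conj l)
    (E7c : i * conj g + s * conj q = conj d * c + conj m * l)
    (E8 : conj i * h + conj s * r = e * conj c + n * conj l)
    (E8c : i * conj h + s * conj r = conj e * c + conj n * l) :
    ptrans (sigmaM a b c d e f g h i j k l m n p q r s)
      = sigmaM a b c d e f g h i j k l m n p q r s := by
  ext ⟨u1, u2⟩ ⟨w1, w2⟩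
  fin_cases u1 <;> fin_cases u2 <;> fin_cases w1 <;> fin_cases w2 <;>
    simp [ptrans, sigmaM, oddVec, evenVec, Prod.ext_iff] <;>
    first
      | ring1
      | linear_combination E1 | linear_combination -E1
      | linear_combination E2 | linear_combination -E2
      | linear_combination E3 | linear_combination -E3
      | linear_combination E4 | linear_combination -E4
      | linear_combination E4c | linear_combination -E4c
      | linear_combination E5 | linear_combination -E5
      | linear_combination E5c | linear_combination -E5c
      | linear_combination E6 | linear_combination -E6
      | linear_combination E6c | linear_combination -E6c
      | linear_combination E7 | linear_combination -E7
      | linear_combination E7c | linear_combination -E7c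
      | linear_combination E8 | linear_combination -E8
      | linear_combination E8c | linear_combination -E8c

theorem stmt5 (t x y : ℝ) (a b c f j k l m p s : ℂ)
    (ha : a ≠ 0) (hb : b ≠ 0) (hf : f ≠ 0) (hak : a * k - b * j ≠ 0)
    (i n d e g q h r : ℂ)
    (hi : i = ((t : ℂ) - s * conj p) / conj f)
    (hn : n = ((Complex.normSq a : ℂ) * (y : ℂ) - (Complex.normSq b : ℂ) * (x : ℂ)
      - conj m * conj b * (a * k - b * j)) / (a * conj (a * k - b * j)))
    (hd : d = ((x : ℂ) - m * conj j) / conj a)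
    (he : e = ((y : ℂ) - n * conj k) / conj b)
    (hfs : f * s - i * p ≠ 0)
    (hg : g = (conj s * (a * conj c + j * conj l) - conj p * (d * conj c + m * conj l))
      / conj (f * s - i * p))
    (hq : q = (conj f * (d * conj c + m * conj l) - conj i * (a * conj c + j * conj l))
      / conj (f * s - i * p))
    (hh : h = (conj s * (b * conj c + k * conj l) - conj p * (e * conj c + n * conj l))
      / conj (f * s - i * p))
    (hr : r = (conj f * (e * conj c + n * conj l) - conj i * (b * conj c + k * conj l))
      / conj (f * s - i * p))
    :
    ptrans (sigmaM a b c d e f g h i j k l m n p q r s)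
      = sigmaM a b c d e f g h i j k l m n p q r s := by
  have hca : conj a ≠ 0 := by simpa using ha
  have hcb : conj b ≠ 0 := by simpa using hb
  have hcf : conj f ≠ 0 := by simpa using hf
  have hcak : conj (a * k - b * j) ≠ 0 :=
    fun h0 => hak (by simpa using congrArg conj h0)
  have hcfs : conj (f * s - i * p) ≠ 0 :=
    fun h0 => hfs (by simpa using congrArg conj h0)
  -- cleared forms of the defining equations
  have hi' : i * conj f = (t : ℂ) - s * conj p := by
    rw [hi, div_mul_cancel₀ _ hcf]
  have hd' : d * conj a = (x : ℂ) - m * conj j := by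
    rw [hd, div_mul_cancel₀ _ hca]
  have he' : e * conj b = (y : ℂ) - n * conj k := by
    rw [he, div_mul_cancel₀ _ hcb]
  have hn' : n * (a * conj (a * k - b * j))
      = (Complex.normSq a : ℂ) * (y : ℂ) - (Complex.normSq b : ℂ) * (x : ℂ)
        - conj m * conj b * (a * k - b * j) := by
    rw [hn, div_mul_cancel₀ _ (mul_ne_zero ha hcak)]
  have hg' : g * conj (f * s - i * p)
      = conj s * (a * conj c + j * conj l) - conj p * (d * conj c + m * conj l) := by
    rw [hg, div_mul_cancel₀ _ hcfs]
  have hq' : q * conj (f * s - i * p)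
      = conj f * (d * conj c + m * conj l) - conj i * (a * conj c + j * conj l) := by
    rw [hq, div_mul_cancel₀ _ hcfs]
  have hh' : h * conj (f * s - i * p)
      = conj s * (b * conj c + k * conj l) - conj p * (e * conj c + n * conj l) := by
    rw [hh, div_mul_cancel₀ _ hcfs]
  have hr' : r * conj (f * s - i * p)
      = conj f * (e * conj c + n * conj l) - conj i * (b * conj c + k * conj l) := by
    rw [hr, div_mul_cancel₀ _ hcfs]
  -- conjugated cleared forms
  have hi'c : conj i * f = (t : ℂ) - conj s * p := by
    have := congrArg conj hi'; simpa [mul_comm] using this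
  have hd'c : conj d * a = (x : ℂ) - conj m * j := by
    have := congrArg conj hd'; simpa [mul_comm] using this
  have he'c : conj e * b = (y : ℂ) - conj n * k := by
    have := congrArg conj he'; simpa [mul_comm] using this
  have hn'c : conj n * (conj a * (a * k - b * j))
      = (Complex.normSq a : ℂ) * (y : ℂ) - (Complex.normSq b : ℂ) * (x : ℂ)
        - m * b * conj (a * k - b * j) := by
    have := congrArg conj hn'; simp only [map_mul, map_sub, Complex.conj_conj,
      Complex.conj_ofReal] at this; simpa [mul_comm, mul_left_comm] using this
  -- key identities
  have E1 : f * conj i + p * conj s = i * conj f + s * conj p := by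
    linear_combination hi'c - hi'
  have E2 : a * conj d + j * conj m = d * conj a + m * conj j := by
    linear_combination hd'c - hd'
  have E3 : b * conj e + k * conj n = e * conj b + n * conj k := by
    linear_combination he'c - he'
  have E4 : a * conj e + j * conj n = d * conj b + m * conj k := by
    have key : (a * conj e + j * conj n) * (conj a * b)
        = (d * conj b + m * conj k) * (conj a * b) := by
      have hNa : (Complex.normSq a : ℂ) = a * conj a := (Complex.mul_conj a).symm
      have hNb : (Complex.normSq b : ℂ) = b * conj b := (Complex.mul_conj b).symm
      have hn'' := hn'c
      rw [hNa, hNb] at hn''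
      simp only [map_sub, map_mul] at hn''
      linear_combination (a * conj a) * he'c - (b * conj b) * hd' - hn''
    exact mul_right_cancel₀ (mul_ne_zero hca hb) key
  have E4c : e * conj a + n * conj j = b * conj d + k * conj m := by
    have := congrArg conj E4
    simp only [map_add, map_mul, Complex.conj_conj] at this
    linear_combination this
  have E5 : conj f * g + conj p * q = a * conj c + j * conj l := by
    have key : (conj f * g + conj p * q) * conj (f * s - i * p)
        = (a * conj c + j * conj l) * conj (f * s - i * p) := by
      have hK : conj (f * s - i * p) = conj f * conj s - conj i * conj p := by
        simp [map_sub, map_mul]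
      have A1 := hg'
      have A2 := hq'
      rw [hK] at A1 A2 ⊢
      linear_combination conj f * A1 + conj p * A2
    exact mul_right_cancel₀ hcfs key
  have E6 : conj f * h + conj p * r = b * conj c + k * conj l := by
    have key : (conj f * h + conj p * r) * conj (f * s - i * p)
        = (b * conj c + k * conj l) * conj (f * s - i * p) := by
      have hK : conj (f * s - i * p) = conj f * conj s - conj i * conj p := by
        simp [map_sub, map_mul]
      have A1 := hh'
      have A2 := hr'
      rw [hK] at A1 A2 ⊢
      linear_combination conj f * A1 + conj p * A2
    exact mul_right_cancel₀ hcfs key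
  have E7 : conj i * g + conj s * q = d * conj c + m * conj l := by
    have key : (conj i * g + conj s * q) * conj (f * s - i * p)
        = (d * conj c + m * conj l) * conj (f * s - i * p) := by
      have hK : conj (f * s - i * p) = conj f * conj s - conj i * conj p := by
        simp [map_sub, map_mul]
      have A1 := hg'
      have A2 := hq'
      rw [hK] at A1 A2 ⊢
      linear_combination conj i * A1 + conj s * A2
    exact mul_right_cancel₀ hcfs key
  have E8 : conj i * h + conj s * r = e * conj c + n * conj l := by
    have key : (conj i * h + conj s * r) * conj (f * s - i * p)
        = (e * conj c + n * conj l) * conj (f * s - i * p) := by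
      have hK : conj (f * s - i * p) = conj f * conj s - conj i * conj p := by
        simp [map_sub, map_mul]
      have A1 := hh'
      have A2 := hr'
      rw [hK] at A1 A2 ⊢
      linear_combination conj i * A1 + conj s * A2
    exact mul_right_cancel₀ hcfs key
  have E5c : f * conj g + p * conj q = conj a * c + conj j * l := by
    have := congrArg conj E5
    simp only [map_add, map_mul, Complex.conj_conj] at this
    linear_combination this
  have E6c : f * conj h + p * conj r = conj b * c + conj k * l := by
    have := congrArg conj E6
    simp only [map_add, map_mul, Complex.conj_conj] at this
    linear_combination this
  have E7c : i * conj g + s * conj q = conj d * c + conj m * l := by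
    have := congrArg conj E7
    simp only [map_add, map_mul, Complex.conj_conj] at this
    linear_combination this
  have E8c : i * conj h + s * conj r = conj e * c + conj n * l := by
    have := congrArg conj E8
    simp only [map_add, map_mul, Complex.conj_conj] at this
    linear_combination this
  exact ptrans_eq_of_identities a b c d e f g h i j k l m n p q r s
    E1 E2 E3 E4 E4c E5 E5c E6 E6c E7 E7c E8 E8c
end
end

section
/- Let a,b,c,d,e,f,g,h,i,j,k,l,m,n,p,q,r,s be 18 complex numbers such that (fs−ip)·(gr−hq)·F(l,−c)·F(μ,−λ) ≠ 0. Then the vectors v₁, v₂, v₃, v₄ are linearly independent over ℂ, and consequently the matrix σ = Σ_{t=1}^4 v_t v_t† has rank exactly 4. -/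
/-!
The vectors v₁, v₃ are supported on the cells (x, y) with x + y even and v₂, v₄ on
the others, so the four are independent as soon as each pair is. A pair of vectors is independent
when some 2 × 2 minor of its coordinates is nonzero: for v₂, v₄ take fs − ip, and for v₁, v₃ note
that F(l, −c) = (el − cn)(al − cj) − (dl − cm)(bl − ck) is a combination of two such minors.
Finally σ = A Aᴴ for the 9 × 4 matrix A with columns vₜ, and rank (A Aᴴ) = rank A = 4.
-/

open Complex ComplexConjugate
open scoped ComplexOrder

noncomputable section

open Matrix

theorem Matrix.rank_sum_vecMulVec_star {R ι m : Type*} [Field R] [PartialOrder R] [StarRing R]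
    [StarOrderedRing R] [Fintype ι] [Fintype m] {v : ι → m → R} (hv : LinearIndependent R v) :
    (∑ t, vecMulVec (v t) (star (v t))).rank = Fintype.card ι := by
  have hsum : ∑ t, vecMulVec (v t) (star (v t)) = (of v)ᵀ * (of v)ᵀᴴ := by
    ext u w
    simp [Matrix.mul_apply, Matrix.sum_apply, vecMulVec_apply]
  rw [hsum, rank_self_mul_conjTranspose, rank_transpose]
  exact hv.rank_matrix

theorem LinearIndependent.pair_of_minor_ne_zero {R ι : Type*} [CommRing R] [NoZeroDivisors R]
    {x y : ι → R} (u w : ι) (h : x u * y w - x w * y u ≠ 0) : LinearIndependent R ![x, y] := by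
  refine LinearIndependent.pair_iff.mpr fun s t hst => ?_
  have hu := congrFun hst u
  have hw := congrFun hst w
  simp only [Pi.add_apply, Pi.smul_apply, smul_eq_mul, Pi.zero_apply] at hu hw
  have hs : s * (x u * y w - x w * y u) = 0 := by linear_combination y w * hu - y u * hw
  have ht : t * (x u * y w - x w * y u) = 0 := by linear_combination x u * hw - x w * hu
  exact ⟨(mul_eq_zero.mp hs).resolve_right h, (mul_eq_zero.mp ht).resolve_right h⟩

theorem LinearIndependent.interleave_of_disjoint_support {R ι : Type*} [Ring R]
    {x₁ x₂ y₁ y₂ : ι → R} (hsupp : ∀ u, (x₁ u = 0 ∧ x₂ u = 0) ∨ (y₁ u = 0 ∧ y₂ u = 0))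
    (hx : LinearIndependent R ![x₁, x₂]) (hy : LinearIndependent R ![y₁, y₂]) :
    LinearIndependent R ![x₁, y₁, x₂, y₂] := by
  rw [Fintype.linearIndependent_iff]
  intro z hz
  simp only [Fin.sum_univ_four, cons_val] at hz
  have hxz : z 0 • x₁ + z 2 • x₂ = 0 := by
    funext u
    have := congrFun hz u
    rcases hsupp u with ⟨h₁, h₂⟩ | ⟨h₁, h₂⟩ <;> simp_all
  have hyz : z 1 • y₁ + z 3 • y₂ = 0 := by
    funext u
    have := congrFun hz u
    rcases hsupp u with ⟨h₁, h₂⟩ | ⟨h₁, h₂⟩ <;> simp_all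
  obtain ⟨h0, h2⟩ := LinearIndependent.pair_iff.mp hx _ _ hxz
  obtain ⟨h1, h3⟩ := LinearIndependent.pair_iff.mp hy _ _ hyz
  intro t
  fin_cases t <;> assumption

theorem oddVec_apply_of_odd (a b c d e : ℂ) {u : Fin 3 × Fin 3} (hu : Odd (u.1.val + u.2.val)) :
    oddVec a b c d e u = 0 := by
  fin_cases u <;> simp_all [oddVec, Nat.odd_iff]

theorem evenVec_apply_of_even (f g h i : ℂ) {u : Fin 3 × Fin 3} (hu : Even (u.1.val + u.2.val)) :
    evenVec f g h i u = 0 := by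
  fin_cases u <;> simp_all [evenVec, Nat.even_iff]

theorem Fquad_eq_minors (a b c d e j k l m n : ℂ) :
    Fquad a b d e j k m n l (-c) =
      (e * l - c * n) * (a * l - c * j) - (d * l - c * m) * (b * l - c * k) := by
  unfold Fquad; ring

theorem linearIndependent_oddVec_pair {a b c d e j k l m n : ℂ}
    (h : Fquad a b d e j k m n l (-c) ≠ 0) :
    LinearIndependent ℂ ![oddVec a b c d e, oddVec j k l m n] := by
  rw [Fquad_eq_minors] at h
  by_cases hA : a * l - c * j = 0
  · have hB : b * l - c * k ≠ 0 := fun hB => h (by rw [hA, hB]; ring)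
    exact .pair_of_minor_ne_zero (2, 0) (1, 1) (by simpa [oddVec] using hB)
  · exact .pair_of_minor_ne_zero (0, 0) (1, 1) (by simpa [oddVec] using hA)

theorem linearIndependent_evenVec_pair {f g h i p q r s : ℂ} (hfs : f * s - i * p ≠ 0) :
    LinearIndependent ℂ ![evenVec f g h i, evenVec p q r s] :=
  .pair_of_minor_ne_zero (1, 0) (1, 2) (by simpa [evenVec] using hfs)

theorem sigmaM_eq_sum_vecMulVec (a b c d e f g h i j k l m n p q r s : ℂ) :
    sigmaM a b c d e f g h i j k l m n p q r s =
      ∑ t, vecMulVec (![oddVec a b c d e, evenVec f g h i, oddVec j k l m n,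
        evenVec p q r s] t) (star (![oddVec a b c d e, evenVec f g h i, oddVec j k l m n,
        evenVec p q r s] t)) := by
  ext u w
  simp [sigmaM, Fin.sum_univ_four, Matrix.sum_apply, vecMulVec_apply]

theorem stmt8 (a b c d e f g h i j k l m n p q r s : ℂ)
    (hcond : (f * s - i * p) * (g * r - h * q) * Fquad a b d e j k m n l (-c) *
      Fquad a b d e j k m n (muP f g h i j k m n p q r s)
        (-(lamP a b d e f g h i p q r s)) ≠ 0) :
    LinearIndependent ℂ
      ![oddVec a b c d e, evenVec f g h i, oddVec j k l m n, evenVec p q r s] ∧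
    (sigmaM a b c d e f g h i j k l m n p q r s).rank = 4 := by
  have hfs : f * s - i * p ≠ 0 :=
    left_ne_zero_of_mul (left_ne_zero_of_mul (left_ne_zero_of_mul hcond))
  have hF : Fquad a b d e j k m n l (-c) ≠ 0 := right_ne_zero_of_mul (left_ne_zero_of_mul hcond)
  have hsupp (u : Fin 3 × Fin 3) :
      (oddVec a b c d e u = 0 ∧ oddVec j k l m n u = 0) ∨
        (evenVec f g h i u = 0 ∧ evenVec p q r s u = 0) := by
    rcases Nat.even_or_odd (u.1.val + u.2.val) with hu | hu
    · exact .inr ⟨evenVec_apply_of_even _ _ _ _ hu, evenVec_apply_of_even _ _ _ _ hu⟩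
    · exact .inl ⟨oddVec_apply_of_odd _ _ _ _ _ hu, oddVec_apply_of_odd _ _ _ _ _ hu⟩
  have hli := LinearIndependent.interleave_of_disjoint_support hsupp
    (linearIndependent_oddVec_pair hF) (linearIndependent_evenVec_pair hfs)
  refine ⟨hli, ?_⟩
  rw [sigmaM_eq_sum_vecMulVec, Matrix.rank_sum_vecMulVec_star hli, Fintype.card_fin]
end
end
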